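/- arXiv:2508.17559 — 2 statements merged into one kernel-verified Lean document; each statement's English description precedes it below -/
import Mathlib

section
/- The burning number of the hypercube graph Q_n is at most ⌈n/2⌉ + 1. -/
/-!
Burn the all-`false` vertex first and the all-`true` vertex second. The Hamming distances from
any vertex to these two are complementary, adding up to `n`, so the first is at most `⌈n/2⌉` or
the second is below `⌈n/2⌉`; and graph distance in `Q_n` never exceeds Hamming distance, since
coordinates can be corrected one at a time.
-/

open Finset

/-- A burning sequence of length `b`: vertex `v i` is burned at time `i+1`,
so it covers the ball of radius `b - (i+1)` by time `b`. -/
def IsBurningSeq {V : Type*} (G : SimpleGraph V) {b : ℕ} (v : Fin b → V) : Prop :=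
  ∀ x : V, ∃ i : Fin b, G.dist (v i) x ≤ b - 1 - (i : ℕ)

/-- The burning number of a graph: the least length of a burning sequence. -/
noncomputable def burningNumber {V : Type*} (G : SimpleGraph V) : ℕ :=
  sInf {b | ∃ v : Fin b → V, IsBurningSeq G v}

/-- The hypercube graph `Q_n` on `{0,1}^n`: adjacency is Hamming distance one. -/
def cubeGraph (n : ℕ) : SimpleGraph (Fin n → Bool) where
  Adj x y := hammingDist x y = 1
  symm := ⟨fun x y h => by rwa [hammingDist_comm]⟩
  loopless := ⟨fun x h => by simp [hammingDist_self] at h⟩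

/-- The Hamming graph `H(n,q)` on `[q]^n`: adjacency is Hamming distance one. -/
def hammingGraph (n q : ℕ) : SimpleGraph (Fin n → Fin q) where
  Adj x y := hammingDist x y = 1
  symm := ⟨fun x y h => by rwa [hammingDist_comm]⟩
  loopless := ⟨fun x h => by simp [hammingDist_self] at h⟩

/-- The Johnson graph `J(n,k)` on `k`-subsets of `[n]`. -/
def johnsonGraph (n k : ℕ) : SimpleGraph {s : Finset (Fin n) // s.card = k} where
  Adj u v := u ≠ v ∧ (u.1 ∩ v.1).card = k - 1
  symm := ⟨by rintro u v ⟨h1, h2⟩; exact ⟨h1.symm, by rwa [Finset.inter_comm]⟩⟩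
  loopless := ⟨by rintro u ⟨h1, -⟩; exact h1 rfl⟩

/-- The halved `n`-cube on even-weight vectors of `F₂^n`: adjacency is Hamming distance two. -/
def halvedCubeGraph (n : ℕ) : SimpleGraph {x : Fin n → ZMod 2 // ∑ i, x i = 0} where
  Adj x y := hammingDist x.1 y.1 = 2
  symm := ⟨fun x y h => by rwa [hammingDist_comm]⟩
  loopless := ⟨fun x h => by simp [hammingDist_self] at h⟩

/-- The cycle `C_n` on `ℤ_n`. -/
def cycleGraphZMod (n : ℕ) : SimpleGraph (ZMod n) where
  Adj x y := x ≠ y ∧ (x - y = 1 ∨ y - x = 1)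
  symm := ⟨by rintro x y ⟨h1, h2⟩; exact ⟨h1.symm, h2.symm⟩⟩
  loopless := ⟨by rintro x ⟨h1, -⟩; exact h1 rfl⟩

section Hamming

variable {ι : Type*} [Fintype ι] [DecidableEq ι] {β : ι → Type*} [∀ i, DecidableEq (β i)]

lemma hammingDist_update_self {x : ∀ i, β i} {i : ι} {a : β i} (ha : a ≠ x i) :
    hammingDist x (Function.update x i a) = 1 := by
  have : ({j | x j ≠ Function.update x i a j} : Finset ι) = {i} := by
    ext j
    by_cases hj : j = i
    · subst hj; simp [ha.symm]
    · simp [hj]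
  exact (congrArg Finset.card this).trans (Finset.card_singleton i)

lemma hammingDist_update_add_one {x y : ∀ i, β i} {i : ι} (hi : x i ≠ y i) :
    hammingDist (Function.update x i (y i)) y + 1 = hammingDist x y := by
  have : ({j | Function.update x i (y i) j ≠ y j} : Finset ι) =
      ({j | x j ≠ y j} : Finset ι).erase i := by
    ext j
    by_cases hj : j = i
    · subst hj; simp
    · simp [hj]
  exact (congrArg (·.card + 1) this).trans (Finset.card_erase_add_one (by simpa using hi))

lemma SimpleGraph.edist_le_hammingDist (G : SimpleGraph (∀ i, β i))
    (hG : ∀ x y, hammingDist x y = 1 → G.Adj x y) (x y : ∀ i, β i) :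
    G.edist x y ≤ hammingDist x y := by
  induction h : hammingDist x y generalizing x with
  | zero => simp [hammingDist_eq_zero.mp h]
  | succ d ih =>
    obtain ⟨i, hi⟩ : ∃ i, x i ≠ y i := by
      by_contra! hxy
      simp [funext hxy] at h
    calc G.edist x y
        ≤ G.edist x (Function.update x i (y i)) + G.edist (Function.update x i (y i)) y :=
          G.edist_triangle
      _ ≤ 1 + d := by
          gcongr
          · exact (G.edist_eq_one_iff_adj.mpr (hG _ _ (hammingDist_update_self hi.symm))).le
          · exact ih _ (by have := hammingDist_update_add_one hi; omega)
      _ = (d + 1 : ℕ) := by push_cast; ring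

lemma SimpleGraph.dist_le_hammingDist (G : SimpleGraph (∀ i, β i))
    (hG : ∀ x y, hammingDist x y = 1 → G.Adj x y) (x y : ∀ i, β i) :
    G.dist x y ≤ hammingDist x y :=
  ENat.toNat_le_of_le_natCast (G.edist_le_hammingDist hG x y)

end Hamming

lemma hammingDist_add_hammingDist_not {ι : Type*} [Fintype ι] (x y : ι → Bool) :
    hammingDist x y + hammingDist (fun i => !x i) y = Fintype.card ι := by
  rw [← Finset.card_univ, ← Finset.card_filter_add_card_filter_not (fun i => x i ≠ y i)]
  congr 1
  apply congrArg Finset.card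
  ext i
  cases x i <;> cases y i <;> simp

lemma burningNumber_le_of_forall_dist_le_or_dist_lt {V : Type*} (G : SimpleGraph V) (u w : V)
    (r : ℕ) (h : ∀ x, G.dist u x ≤ r ∨ G.dist w x < r) :
    burningNumber G ≤ r + 1 := by
  refine Nat.sInf_le ⟨fun i : Fin (r + 1) => if (i : ℕ) = 0 then u else w, fun x => ?_⟩
  rcases h x with hu | hw
  · exact ⟨0, by simpa using hu⟩
  · exact ⟨⟨1, by omega⟩, show G.dist w x ≤ r + 1 - 1 - 1 by omega⟩

/-- `burn(Q_n) ≤ ⌈n/2⌉ + 1`. -/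
theorem cube_burningNumber_le (n : ℕ) :
    burningNumber (cubeGraph n) ≤ (n + 1) / 2 + 1 := by
  have hdist (x y : Fin n → Bool) : (cubeGraph n).dist x y ≤ hammingDist x y :=
    (cubeGraph n).dist_le_hammingDist (fun _ _ h => h) x y
  refine burningNumber_le_of_forall_dist_le_or_dist_lt _ (fun _ => false) (fun _ => true) _
    fun x => ?_
  have hsum : hammingDist (fun _ => false) x + hammingDist (fun _ => true) x = n := by
    simpa using hammingDist_add_hammingDist_not (fun _ : Fin n => false) x
  have := hdist (fun _ => false) x
  have := hdist (fun _ => true) x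
  omega
end

section
/- Let n ≥ 2k ≥ 2, a = ⌈n/k⌉, and b = (1 − 1/a)·k + (a+1)/2. Then the burning number of the Johnson graph J(n,k) is at most ⌊b⌋. -/
open Finset

/-
Cover `[n]` by `a = ⌈n/k⌉` blocks `S₀, …, S_{a-1}` of size `k` and burn `S_j` at time `j + 1`.
Since `dist(u, v) = k - |u ∩ v|` in `J(n,k)`, the vertex `x` is burned by `S_j` at time `B` as soon as
`|x ∩ S_j| > k + j - B`. If this failed for every `j < a`, summing over the blocks would give
`k = |x| ≤ ∑_{j<a} (k + j - B)`, and the choice `B = ⌊(1 - 1/a)k + (a+1)/2⌋` makes the right-hand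
side smaller than `k`.
-/

theorem exists_lt_card_inter_of_sum_lt {ι α R : Type*} [DecidableEq α] [Semiring R]
    [LinearOrder R] [IsOrderedRing R] {t : Finset ι} {S : ι → Finset α} {x : Finset α}
    (hx : x ⊆ t.biUnion S) {f : ι → R} (hf : ∑ j ∈ t, f j < #x) :
    ∃ j ∈ t, f j < #(x ∩ S j) := by
  by_contra! h
  refine hf.not_ge ?_
  calc (#x : R) ≤ ∑ j ∈ t, (#(x ∩ S j) : R) := by
        rw [← Nat.cast_sum]
        gcongr
        calc #x ≤ #(t.biUnion fun j ↦ x ∩ S j) := card_le_card fun m hm ↦ by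
                obtain ⟨j, hj, hmj⟩ := mem_biUnion.1 (hx hm)
                exact mem_biUnion.2 ⟨j, hj, mem_inter.2 ⟨hm, hmj⟩⟩
          _ ≤ _ := card_biUnion_le
    _ ≤ ∑ j ∈ t, f j := sum_le_sum h

theorem sum_range_add_sub_floor_lt {a : ℕ} (ha : 0 < a) (k : ℕ) :
    ∑ j ∈ range a, ((k : ℝ) + j - ⌊(1 - 1 / (a : ℝ)) * k + ((a : ℝ) + 1) / 2⌋₊) < k := by
  set B := ⌊(1 - 1 / (a : ℝ)) * k + ((a : ℝ) + 1) / 2⌋₊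
  have haR : (0 : ℝ) < a := by exact_mod_cast ha
  have hB : (1 - 1 / (a : ℝ)) * k + ((a : ℝ) + 1) / 2 < B + 1 := Nat.lt_floor_add_one _
  have hgauss : (∑ j ∈ range a, (j : ℝ)) * 2 = a * (a - 1) := by
    have h := congrArg (Nat.cast : ℕ → ℝ) (sum_range_id_mul_two a)
    push_cast [Nat.cast_sub ha] at h
    exact h
  have hexpand : (a : ℝ) * ((1 - 1 / (a : ℝ)) * k + ((a : ℝ) + 1) / 2) =
      (a - 1) * k + a * (a + 1) / 2 := by
    field_simp
  rw [sum_sub_distrib, sum_add_distrib, sum_const, card_range, nsmul_eq_mul, sum_const,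
    card_range, nsmul_eq_mul]
  nlinarith [mul_lt_mul_of_pos_left hB haR]

theorem johnsonGraph_exists_adj_card_sdiff {n k : ℕ} {u v : {s : Finset (Fin n) // #s = k}}
    (huv : u ≠ v) : ∃ w, (johnsonGraph n k).Adj u w ∧ #(w.1 \ v.1) + 1 = #(u.1 \ v.1) := by
  obtain ⟨α, hα⟩ : (u.1 \ v.1).Nonempty := sdiff_nonempty.2 fun h ↦
    huv (Subtype.ext (eq_of_subset_of_card_le h (by rw [u.2, v.2])))
  obtain ⟨β, hβ⟩ : (v.1 \ u.1).Nonempty := by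
    rw [← card_pos, card_sdiff_comm (v.2.trans u.2.symm)]
    exact card_pos.2 ⟨α, hα⟩
  have hα_pos := card_pos.2 ⟨α, hα⟩
  rw [mem_sdiff] at hα hβ
  have hk : 0 < k := u.2 ▸ card_pos.2 ⟨α, hα.1⟩
  have hcard : #(insert β (u.1.erase α)) = k := by
    rw [card_insert_of_notMem fun h ↦ hβ.2 (mem_of_mem_erase h), card_erase_of_mem hα.1, u.2]
    omega
  have hinter : u.1 ∩ insert β (u.1.erase α) = u.1.erase α := by grind
  refine ⟨⟨_, hcard⟩, ⟨fun h ↦ ?_, ?_⟩, ?_⟩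
  · have : α ∈ insert β (u.1.erase α) := Eq.mp (congrArg (α ∈ ·.1) h) hα.1
    grind
  · rw [hinter, card_erase_of_mem hα.1, u.2]
  · rw [insert_sdiff_of_mem _ hβ.1, erase_sdiff_comm, card_erase_of_mem (mem_sdiff.2 hα)]
    omega

theorem johnsonGraph_exists_walk_length_le {n k : ℕ} (u v : {s : Finset (Fin n) // #s = k}) :
    ∃ p : (johnsonGraph n k).Walk u v, p.length ≤ #(u.1 \ v.1) := by
  obtain rfl | huv := eq_or_ne u v
  · exact ⟨.nil, Nat.zero_le _⟩
  obtain ⟨w, huw, hw⟩ := johnsonGraph_exists_adj_card_sdiff huv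
  obtain ⟨p, hp⟩ := johnsonGraph_exists_walk_length_le w v
  exact ⟨.cons huw p, by rw [SimpleGraph.Walk.length_cons]; omega⟩
termination_by #(u.1 \ v.1)

theorem johnsonGraph_dist_le_card_sdiff {n k : ℕ} (u v : {s : Finset (Fin n) // #s = k}) :
    (johnsonGraph n k).dist u v ≤ #(u.1 \ v.1) :=
  have ⟨p, hp⟩ := johnsonGraph_exists_walk_length_le u v
  (SimpleGraph.dist_le p).trans hp

theorem exists_card_eq_cover {n k a : ℕ} (hk : 0 < k) (hkn : k ≤ n) (hna : n ≤ a * k) :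
    ∃ S : ℕ → Finset (Fin n), (∀ j, #(S j) = k) ∧ ∀ m, ∃ j < a, m ∈ S j := by
  have hstart (j : ℕ) : min (j * k) (n - k) + k ≤ n := by omega
  refine ⟨fun j ↦ (Ico (min (j * k) (n - k)) (min (j * k) (n - k) + k)).attachFin
    fun m hm ↦ (mem_Ico.1 hm).2.trans_le (hstart j), fun j ↦ ?_, fun m ↦ ⟨m / k, ?_, ?_⟩⟩
  · rw [card_attachFin, Nat.card_Ico]
    omega
  · exact (Nat.div_lt_iff_lt_mul hk).2 (m.2.trans_le hna)
  · rw [mem_attachFin, mem_Ico]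
    have := Nat.div_mul_le_self m k
    have := Nat.lt_div_mul_add (a := m) hk
    omega

theorem johnsonGraph_isBurningSeq_of_cover {n k a B : ℕ} {S : ℕ → Finset (Fin n)}
    (hS : ∀ j, #(S j) = k) (hcover : ∀ m, ∃ j < a, m ∈ S j)
    (hB : ∑ j ∈ range a, ((k : ℝ) + j - B) < k) :
    IsBurningSeq (johnsonGraph n k) fun i : Fin B ↦ ⟨S i, hS i⟩ := by
  intro x
  have hx : x.1 ⊆ (range a).biUnion S := fun m _ ↦
    have ⟨j, hj, hm⟩ := hcover m
    mem_biUnion.2 ⟨j, mem_range.2 hj, hm⟩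
  obtain ⟨j, -, hj⟩ := exists_lt_card_inter_of_sum_lt hx (by rwa [x.2])
  have hjB : k + j < B + #(x.1 ∩ S j) := by
    rw [sub_lt_iff_lt_add'] at hj
    exact_mod_cast hj
  have hinter : #(x.1 ∩ S j) ≤ k := (card_le_card inter_subset_left).trans x.2.le
  refine ⟨⟨j, by omega⟩, ?_⟩
  calc (johnsonGraph n k).dist ⟨S j, hS j⟩ x ≤ #(S j \ x.1) := johnsonGraph_dist_le_card_sdiff _ _
    _ = k - #(x.1 ∩ S j) := by rw [card_sdiff, hS]
    _ ≤ B - 1 - j := by omega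

/-- For `n ≥ 2k ≥ 2` and `a = ⌈n/k⌉`,
`burn(J(n,k)) ≤ ⌊(1 - 1/a)k + (a+1)/2⌋`. -/
theorem johnson_burningNumber_le (n k : ℕ) (hk : 1 ≤ k) (hn : 2 * k ≤ n) :
    burningNumber (johnsonGraph n k) ≤
      ⌊(1 - 1 / (⌈(n : ℝ) / k⌉₊ : ℝ)) * k + ((⌈(n : ℝ) / k⌉₊ : ℝ) + 1) / 2⌋₊ := by
  set a := ⌈(n : ℝ) / k⌉₊
  have hna : n ≤ a * k := by
    have hkR : (0 : ℝ) < k := by exact_mod_cast hk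
    exact_mod_cast (div_le_iff₀ hkR).1 (Nat.le_ceil ((n : ℝ) / k))
  have ha : 0 < a := Nat.pos_of_ne_zero fun h ↦ by rw [h, zero_mul] at hna; omega
  obtain ⟨S, hS, hcover⟩ := exists_card_eq_cover hk (by omega) hna
  exact Nat.sInf_le
    ⟨_, johnsonGraph_isBurningSeq_of_cover hS hcover (sum_range_add_sub_floor_lt ha k)⟩
end
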